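/- arXiv:2402.11961 — 7 statements merged into one kernel-verified Lean document; each statement's English description precedes it below -/
import Mathlib

section
/- (Lemma 2.) If d and d' are admissible disclosure policies and d is more transparent than d', then π_d(θ) ≥ π_{d'}(θ) for every θ ∈ Θ. -/
open Set MeasureTheory

noncomputable section

/-- The set of belief-compatible emission levels under disclosure policy `d`,
on the emission space `E = [0, ebar]`. -/
def BCset (ebar : ℝ) (d : ℝ → ℝ) : Set ℝ :=
  {e | e ∈ Icc 0 ebar ∧ ∀ e' ∈ Icc 0 ebar, d e' = d e → e' ≤ e}

/-- `d` is more transparent than `d'`: the fibers of `d` refine those of `d'`. -/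
def MoreTransparent (ebar : ℝ) (d d' : ℝ → ℝ) : Prop :=
  ∀ e₁ ∈ Icc (0:ℝ) ebar, ∀ e₂ ∈ Icc (0:ℝ) ebar, d e₁ = d e₂ → d' e₁ = d' e₂

/-- A policy is admissible if for every type `θ ∈ Θ`, the profit `π θ ·`
attains a maximum on the belief-compatible set. -/
def Admissible (ebar θl θh : ℝ) (π : ℝ → ℝ → ℝ) (d : ℝ → ℝ) : Prop :=
  ∀ θ ∈ Icc θl θh, ∃ e ∈ BCset ebar d, ∀ e' ∈ BCset ebar d, π θ e' ≤ π θ e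

/-- The maximized profit `π_d(θ)` of type `θ` under policy `d`. -/
def profitFn (ebar : ℝ) (π : ℝ → ℝ → ℝ) (d : ℝ → ℝ) (θ : ℝ) : ℝ :=
  sSup (π θ '' BCset ebar d)

/-- The equilibrium emission `γ_d(θ)`: the least maximizer of `π θ ·` on the
belief-compatible set. -/
def emissionFn (ebar : ℝ) (π : ℝ → ℝ → ℝ) (d : ℝ → ℝ) (θ : ℝ) : ℝ :=
  sInf {e | e ∈ BCset ebar d ∧ ∀ e' ∈ BCset ebar d, π θ e' ≤ π θ e}

/-- Expected profit `Π(d) = ∫ π_d(θ) f(θ) dθ`. -/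
def ExpProfit (ebar θl θh : ℝ) (π : ℝ → ℝ → ℝ) (f : ℝ → ℝ) (d : ℝ → ℝ) : ℝ :=
  ∫ θ in Icc θl θh, profitFn ebar π d θ * f θ

/-- Expected emission `Γ(d) = ∫ γ_d(θ) f(θ) dθ`. -/
def ExpEmission (ebar θl θh : ℝ) (π : ℝ → ℝ → ℝ) (f : ℝ → ℝ) (d : ℝ → ℝ) : ℝ :=
  ∫ θ in Icc θl θh, emissionFn ebar π d θ * f θ

/-- `d` is Pareto efficient: no admissible policy yields weakly higher expected
profit and weakly lower expected emission with at least one strict. -/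
def Efficient (ebar θl θh : ℝ) (π : ℝ → ℝ → ℝ) (f : ℝ → ℝ) (d : ℝ → ℝ) : Prop :=
  ¬ ∃ d' : ℝ → ℝ, Admissible ebar θl θh π d' ∧
      ExpProfit ebar θl θh π f d ≤ ExpProfit ebar θl θh π f d' ∧
      ExpEmission ebar θl θh π f d' ≤ ExpEmission ebar θl θh π f d ∧
      (ExpProfit ebar θl θh π f d < ExpProfit ebar θl θh π f d' ∨
        ExpEmission ebar θl θh π f d' < ExpEmission ebar θl θh π f d)

lemma top_mem_BCset {ebar : ℝ} (hebar : 0 ≤ ebar) (d : ℝ → ℝ) : ebar ∈ BCset ebar d :=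
  ⟨⟨hebar, le_rfl⟩, fun _ he' _ => he'.2⟩

/-- Finer fibers impose fewer belief constraints, so more levels are belief-compatible. -/
lemma BCset_subset_of_moreTransparent {ebar : ℝ} {d d' : ℝ → ℝ}
    (h : MoreTransparent ebar d d') : BCset ebar d' ⊆ BCset ebar d :=
  fun e ⟨heI, hcomp⟩ => ⟨heI, fun e' he' hde => hcomp e' he' (h e' he' e heI hde)⟩

theorem transparent_profit_general (ebar θl θh : ℝ)
    (π : ℝ → ℝ → ℝ)
    (d d' : ℝ → ℝ)
    (hd : Admissible ebar θl θh π d)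
    (h : MoreTransparent ebar d d') :
    ∀ θ ∈ Icc θl θh, profitFn ebar π d' θ ≤ profitFn ebar π d θ := by
  intro θ hθ
  obtain ⟨e, he, hmax⟩ := hd θ hθ
  have hbdd : BddAbove (π θ '' BCset ebar d) := ⟨π θ e, forall_mem_image.2 hmax⟩
  -- needed since `sSup ∅ = 0`
  have hne : (BCset ebar d').Nonempty := ⟨ebar, top_mem_BCset (he.1.1.trans he.1.2) d'⟩
  exact csSup_le_csSup hbdd (hne.image _) (image_mono (BCset_subset_of_moreTransparent h))

/-- Lemma 2: more transparency yields weakly higher profit, type by type. -/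
theorem transparent_profit (ebar θl θh : ℝ) (hebar : 0 < ebar) (hθ : θl ≤ θh)
    (π : ℝ → ℝ → ℝ)
    (hcont : ContinuousOn (fun p : ℝ × ℝ => π p.1 p.2) (Icc θl θh ×ˢ Icc 0 ebar))
    (hconc : ∀ θ ∈ Icc θl θh, StrictConcaveOn ℝ (Icc 0 ebar) (π θ))
    (hIR : ∀ θ ∈ Icc θl θh, π θ 0 < π θ ebar)
    (d d' : ℝ → ℝ)
    (hd : Admissible ebar θl θh π d) (hd' : Admissible ebar θl θh π d')
    (h : MoreTransparent ebar d d') :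
    ∀ θ ∈ Icc θl θh, profitFn ebar π d' θ ≤ profitFn ebar π d θ :=
  transparent_profit_general ebar θl θh π d d' hd h
end
end

section
/- (Lemma 1.) An emission scheme 𝐞 : Θ → E is implementable if and only if it satisfies incentive compatibility, π(θ, 𝐞(θ)) ≥ π(θ, 𝐞(θ')) for all θ, θ' ∈ Θ, and individual rationality, π(θ, 𝐞(θ)) ≥ π(θ, ē) for all θ ∈ Θ. -/
open Set MeasureTheory

noncomputable section

/-- Lemma 1: an emission scheme is implementable iff it satisfies
incentive compatibility and individual rationality. -/
theorem implementable_iff_IC_IR (ebar θl θh : ℝ) (hebar : 0 < ebar) (hθ : θl ≤ θh)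
    (π : ℝ → ℝ → ℝ)
    (hcont : ContinuousOn (fun p : ℝ × ℝ => π p.1 p.2) (Icc θl θh ×ˢ Icc 0 ebar))
    (hconc : ∀ θ ∈ Icc θl θh, StrictConcaveOn ℝ (Icc 0 ebar) (π θ))
    (hIR : ∀ θ ∈ Icc θl θh, π θ 0 < π θ ebar)
    (e : ℝ → ℝ) (he : ∀ θ ∈ Icc θl θh, e θ ∈ Icc 0 ebar) :
    (∃ d : ℝ → ℝ, ∀ θ ∈ Icc θl θh,
        e θ ∈ BCset ebar d ∧ ∀ e' ∈ BCset ebar d, π θ e' ≤ π θ (e θ)) ↔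
      ((∀ θ ∈ Icc θl θh, ∀ θ' ∈ Icc θl θh, π θ (e θ') ≤ π θ (e θ)) ∧
        (∀ θ ∈ Icc θl θh, π θ ebar ≤ π θ (e θ))) := by
  classical
  constructor
  · rintro ⟨d, hd⟩
    refine ⟨fun θ hθ1 θ' hθ2 => (hd θ hθ1).2 _ (hd θ' hθ2).1, fun θ hθ1 => ?_⟩
    exact (hd θ hθ1).2 ebar ⟨⟨hebar.le, le_rfl⟩, fun e' he' _ => he'.2⟩
  · rintro ⟨hIC, hIRe⟩
    set P : ℝ → Prop := fun x => (∃ θ'' ∈ Icc θl θh, e θ'' = x) ∨ x = ebar with hP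
    refine ⟨fun x => if P x then x else ebar, fun θ hθ1 => ?_⟩
    have hdθ : (if P (e θ) then e θ else ebar) = e θ := if_pos (Or.inl ⟨θ, hθ1, rfl⟩)
    constructor
    · refine ⟨he θ hθ1, fun e' he' hde => ?_⟩
      simp only at hde
      rw [hdθ] at hde
      by_cases h : P e'
      · rw [if_pos h] at hde; exact hde.le
      · rw [if_neg h] at hde
        calc e' ≤ ebar := he'.2
          _ = e θ := hde
    · rintro e' ⟨⟨h0, h1⟩, hmax⟩
      by_cases h : ∃ θ'' ∈ Icc θl θh, e θ'' = e'
      · obtain ⟨θ'', hθ'', hee⟩ := h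
        rw [← hee]
        exact hIC θ hθ1 θ'' hθ''
      · by_cases hb : e' = ebar
        · rw [hb]; exact hIRe θ hθ1
        · exfalso
          have hde' : (if P e' then e' else ebar) = ebar := if_neg (by
            intro hh; rcases hh with hh | hh
            · exact h hh
            · exact hb hh)
          have hdb : (if P ebar then ebar else ebar) = ebar := by
            by_cases hpb : P ebar <;> simp [hpb]
          have := hmax ebar ⟨hebar.le, le_rfl⟩ (by show (if P ebar then ebar else ebar) = (if P e' then e' else ebar); rw [hde', hdb])
          exact hb (le_antisymm h1 this)
end
end

section
/- (Proposition 1.) Fix θ ∈ Θ and e* ∈ E. There exists a disclosure policy d with e* ∈ Ẽ_d and π(θ, e*) ≥ π(θ, e) for all e ∈ Ẽ_d if and only if π(θ, e*) ≥ π(θ, ē). Moreover, in that case the binary policy d defined by d(e) = e* for e ≤ e* and d(e) = ē for e > e* has belief-compatible set Ẽ_d = {e*, ē} and satisfies π(θ, e*) ≥ π(θ, e) for all e ∈ Ẽ_d. -/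
open Set MeasureTheory

noncomputable section

/-- Proposition 1: an emission level `e*` is implementable for type `θ`
iff it is individually rational, and in that case the binary policy implements it. -/
theorem first_best (ebar θl θh : ℝ) (hebar : 0 < ebar) (hθ : θl ≤ θh)
    (π : ℝ → ℝ → ℝ)
    (hcont : ContinuousOn (fun p : ℝ × ℝ => π p.1 p.2) (Icc θl θh ×ˢ Icc 0 ebar))
    (hconc : ∀ θ ∈ Icc θl θh, StrictConcaveOn ℝ (Icc 0 ebar) (π θ))
    (hIR : ∀ θ ∈ Icc θl θh, π θ 0 < π θ ebar)
    (θ : ℝ) (hθmem : θ ∈ Icc θl θh) (estar : ℝ) (hestar : estar ∈ Icc 0 ebar) :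
    ((∃ d : ℝ → ℝ, estar ∈ BCset ebar d ∧ ∀ e ∈ BCset ebar d, π θ e ≤ π θ estar) ↔
        π θ ebar ≤ π θ estar) ∧
      (π θ ebar ≤ π θ estar →
        BCset ebar (fun e => if e ≤ estar then estar else ebar) = {estar, ebar} ∧
          ∀ e ∈ BCset ebar (fun e => if e ≤ estar then estar else ebar),
            π θ e ≤ π θ estar) := by
  have hbar : ebar ∈ Icc (0:ℝ) ebar := ⟨le_of_lt hebar, le_refl _⟩
  have hbarBC : ∀ d : ℝ → ℝ, ebar ∈ BCset ebar d := fun d =>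
    ⟨hbar, fun e' he' _ => he'.2⟩
  set d0 : ℝ → ℝ := fun e => if e ≤ estar then estar else ebar with hd0
  have key : π θ ebar ≤ π θ estar →
      BCset ebar d0 = {estar, ebar} ∧
        ∀ e ∈ BCset ebar d0, π θ e ≤ π θ estar := by
    intro hle
    have hset : BCset ebar d0 = {estar, ebar} := by
      ext e
      constructor
      · rintro ⟨he, hcomp⟩
        by_cases h : e ≤ estar
        · left
          have : estar ≤ e := by
            apply hcomp estar hestar
            simp [hd0, h]
          linarith
        · right
          have hlt : estar < ebar := lt_of_lt_of_le (not_le.mp h) he.2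
          have : ebar ≤ e := by
            apply hcomp ebar hbar
            simp [hd0, h, not_le.mpr hlt]
          exact (le_antisymm he.2 this).symm ▸ rfl
      · intro hmem
        rcases hmem with h | h
        · rw [show e = estar from h]
          refine ⟨hestar, fun e' he' hd => ?_⟩
          by_cases hc : e' ≤ estar
          · exact hc
          · exfalso
            simp only [hd0, if_neg hc, if_pos (le_refl estar)] at hd
            exact hc (hd ▸ he'.2)
        · rw [show e = ebar from h]
          exact hbarBC d0
    refine ⟨hset, fun e he => ?_⟩
    rw [hset] at he
    rcases he with rfl | rfl
    · exact le_refl _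
    · exact hle
  constructor
  · constructor
    · rintro ⟨d, hdBC, hdmax⟩
      exact hdmax ebar (hbarBC d)
    · intro hle
      exact ⟨d0, by rw [(key hle).1]; exact Or.inl rfl, (key hle).2⟩
  · exact key
end
end

section
/- (Proposition 5.) The full-disclosure policy induces the highest expected emission level among all efficient disclosure policies: if d is an admissible efficient policy, then Γ(d) ≤ Γ(d_id), where d_id is the identity on E. -/
open Set MeasureTheory

noncomputable section

/-! Full disclosure makes every emission level belief-compatible, so each type's maximized
profit can only rise, and admissibility follows from continuity on the compact interval.
Hence full disclosure weakly raises expected profit; if it also strictly lowered expected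
emission it would Pareto-dominate `d`, contradicting efficiency. -/

section DisclosurePolicy

variable {ebar θl θh : ℝ} {π : ℝ → ℝ → ℝ} {f d d' : ℝ → ℝ}

lemma BCset_subset_Icc : BCset ebar d ⊆ Icc 0 ebar := fun _ he => he.1

lemma BCset_id : BCset ebar (fun e => e) = Icc 0 ebar :=
  Set.ext fun _ => ⟨fun he => he.1, fun he => ⟨he, fun _ _ heq => heq.le⟩⟩

lemma ebar_mem_BCset (hebar : 0 ≤ ebar) : ebar ∈ BCset ebar d :=
  ⟨⟨hebar, le_rfl⟩, fun _ he' _ => he'.2⟩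

lemma admissible_id (hebar : 0 ≤ ebar)
    (hcont : ∀ θ ∈ Icc θl θh, ContinuousOn (π θ) (Icc 0 ebar)) :
    Admissible ebar θl θh π (fun e => e) := by
  intro θ hθ
  rw [BCset_id]
  exact isCompact_Icc.exists_isMaxOn (nonempty_Icc.2 hebar) (hcont θ hθ)

lemma profitFn_mono {θ : ℝ} (hsub : BCset ebar d ⊆ BCset ebar d')
    (hne : (BCset ebar d).Nonempty) (hbdd : BddAbove (π θ '' BCset ebar d')) :
    profitFn ebar π d θ ≤ profitFn ebar π d' θ :=
  csSup_le_csSup hbdd (hne.image _) (image_mono hsub)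

lemma profitFn_le_profitFn_id {θ : ℝ} (hebar : 0 ≤ ebar)
    (hcont : ContinuousOn (π θ) (Icc 0 ebar)) :
    profitFn ebar π d θ ≤ profitFn ebar π (fun e => e) θ := by
  refine profitFn_mono ?_ ⟨ebar, ebar_mem_BCset hebar⟩ ?_
  · exact BCset_id (ebar := ebar) ▸ BCset_subset_Icc
  · rw [BCset_id]
    exact (isCompact_Icc.image_of_continuousOn hcont).bddAbove

lemma expProfit_mono (hf0 : ∀ θ ∈ Icc θl θh, 0 ≤ f θ)
    (hint : IntegrableOn (fun θ => profitFn ebar π d θ * f θ) (Icc θl θh))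
    (hint' : IntegrableOn (fun θ => profitFn ebar π d' θ * f θ) (Icc θl θh))
    (hle : ∀ θ ∈ Icc θl θh, profitFn ebar π d θ ≤ profitFn ebar π d' θ) :
    ExpProfit ebar θl θh π f d ≤ ExpProfit ebar θl θh π f d' :=
  setIntegral_mono_on hint hint' measurableSet_Icc fun θ hθ =>
    mul_le_mul_of_nonneg_right (hle θ hθ) (hf0 θ hθ)

lemma Efficient.expEmission_le (heff : Efficient ebar θl θh π f d)
    (hd' : Admissible ebar θl θh π d')
    (hprofit : ExpProfit ebar θl θh π f d ≤ ExpProfit ebar θl θh π f d') :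
    ExpEmission ebar θl θh π f d ≤ ExpEmission ebar θl θh π f d' := by
  by_contra! hlt
  exact heff ⟨d', hd', hprofit, hlt.le, Or.inr hlt⟩

end DisclosurePolicy

theorem full_disclosure_highest_emission_among_efficient_general (ebar θl θh : ℝ)
    (hebar : 0 < ebar)
    (π : ℝ → ℝ → ℝ)
    (hcont : ContinuousOn (fun p : ℝ × ℝ => π p.1 p.2) (Icc θl θh ×ˢ Icc 0 ebar))
    (f : ℝ → ℝ) (hf0 : ∀ θ ∈ Icc θl θh, 0 ≤ f θ)
    (hint : ∀ d : ℝ → ℝ, Admissible ebar θl θh π d →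
        IntegrableOn (fun θ => profitFn ebar π d θ * f θ) (Icc θl θh) ∧
        IntegrableOn (fun θ => emissionFn ebar π d θ * f θ) (Icc θl θh))
    (d : ℝ → ℝ) (hd : Admissible ebar θl θh π d)
    (heff : Efficient ebar θl θh π f d) :
    ExpEmission ebar θl θh π f d ≤ ExpEmission ebar θl θh π f (fun e => e) := by
  have hsection : ∀ θ ∈ Icc θl θh, ContinuousOn (π θ) (Icc 0 ebar) :=
    fun θ hθ => hcont.uncurry_left θ hθ
  have hid := admissible_id hebar.le hsection
  refine heff.expEmission_le hid (expProfit_mono hf0 (hint d hd).1 (hint _ hid).1 ?_)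
  exact fun θ hθ => profitFn_le_profitFn_id hebar.le (hsection θ hθ)

/-- Proposition 5: full disclosure induces the highest expected emission
among all efficient policies. -/
theorem full_disclosure_highest_emission_among_efficient (ebar θl θh : ℝ)
    (hebar : 0 < ebar) (hθ : θl ≤ θh)
    (π : ℝ → ℝ → ℝ)
    (hcont : ContinuousOn (fun p : ℝ × ℝ => π p.1 p.2) (Icc θl θh ×ˢ Icc 0 ebar))
    (hconc : ∀ θ ∈ Icc θl θh, StrictConcaveOn ℝ (Icc 0 ebar) (π θ))
    (hIR : ∀ θ ∈ Icc θl θh, π θ 0 < π θ ebar)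
    (f : ℝ → ℝ) (hf0 : ∀ θ ∈ Icc θl θh, 0 ≤ f θ)
    (hf1 : (∫ θ in Icc θl θh, f θ) = 1)
    (hint : ∀ d : ℝ → ℝ, Admissible ebar θl θh π d →
        IntegrableOn (fun θ => profitFn ebar π d θ * f θ) (Icc θl θh) ∧
        IntegrableOn (fun θ => emissionFn ebar π d θ * f θ) (Icc θl θh))
    (d : ℝ → ℝ) (hd : Admissible ebar θl θh π d)
    (heff : Efficient ebar θl θh π f d) :
    ExpEmission ebar θl θh π f d ≤ ExpEmission ebar θl θh π f (fun e => e) :=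
  full_disclosure_highest_emission_among_efficient_general ebar θl θh hebar π hcont f hf0 hint d hd
    heff
end
end

section
/- For any e* ∈ E, the threshold policy d_{e*} satisfies Ẽ_{d_{e*}} = [0, e*] ∪ {ē}; it is admissible, and its equilibrium emission scheme is given by γ_{d_{e*}}(θ) = min(ê(θ), e*) for every θ ∈ Θ with e̲(θ) ≤ e*, and γ_{d_{e*}}(θ) = ē for every θ ∈ Θ with e̲(θ) > e*. -/
/-!
Under `d_{e*}` every level above `e*` is pooled with `ē`, so the belief-compatible levels are
`[0, e*] ∪ {ē}`. A strictly concave profit increases strictly up to its peak `ê(θ)`, so on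
`[0, e*]` it peaks at `min(ê(θ), e*)`, and every lower level does strictly worse. The firm thus
compares this level with `ē`, and `e̲(θ) ≤ e*` says exactly that some level in `[0, e*]` is at
least as profitable as `ē`. In both cases the maximizer is found explicitly, which also gives
admissibility.
-/

open Set MeasureTheory

noncomputable section

def thresholdPolicy (ebar estar : ℝ) : ℝ → ℝ := fun e => if e ≤ estar then e else ebar

def maximizersOn {α β : Type*} [Preorder β] (f : α → β) (s : Set α) : Set α :=
  {e ∈ s | IsMaxOn f s e}

theorem isLeast_maximizersOn {α β : Type*} [LinearOrder α] [Preorder β] {f : α → β}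
    {s : Set α} {m : α} (hm : m ∈ s) (hmax : IsMaxOn f s m)
    (hlt : ∀ e ∈ s, e < m → f e < f m) : IsLeast (maximizersOn f s) m :=
  ⟨⟨hm, hmax⟩, fun e ⟨he, hemax⟩ => not_lt.1 fun hem => (hlt e he hem).not_ge (hemax hm)⟩

section Concave

variable {𝕜 β : Type*} [Field 𝕜] [LinearOrder 𝕜] [IsStrictOrderedRing 𝕜]
  [AddCommMonoid β] [LinearOrder β] [IsOrderedCancelAddMonoid β] [Module 𝕜 β]
  [PosSMulStrictMono 𝕜 β] {s : Set 𝕜} {f : 𝕜 → β} {x₀ : 𝕜}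

theorem StrictConcaveOn.strictMonoOn_of_isMaxOn (hf : StrictConcaveOn 𝕜 s f) (hx₀ : x₀ ∈ s)
    (hmax : IsMaxOn f s x₀) : StrictMonoOn f (s ∩ Iic x₀) := by
  rintro a ⟨ha, -⟩ b ⟨hb, hbx₀⟩ hab
  rcases hbx₀.lt_or_eq with hbx₀ | rfl
  · have := hf.lt_on_openSegment ha hx₀ (hab.trans hbx₀).ne (Ioo_subset_openSegment ⟨hab, hbx₀⟩)
    rwa [min_eq_left (hmax ha)] at this
  · exact (hmax ha).lt_of_ne fun heq =>
      hab.ne (hf.eq_of_isMaxOn (fun y hy => heq ▸ hmax hy) hmax ha hb)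

theorem StrictConcaveOn.isMaxOn_min_of_isMaxOn (hf : StrictConcaveOn 𝕜 s f) (hx₀ : x₀ ∈ s)
    (hmax : IsMaxOn f s x₀) {c : 𝕜} (hc : c ∈ s) : IsMaxOn f (s ∩ Iic c) (min x₀ c) := by
  rintro e ⟨he, hec⟩
  rcases le_or_gt e (min x₀ c) with hle | hlt
  · have hmin : min x₀ c ∈ s ∩ Iic x₀ :=
      ⟨by rcases min_choice x₀ c with h | h <;> rw [h] <;> assumption, min_le_left _ _⟩
    exact (hf.strictMonoOn_of_isMaxOn hx₀ hmax).monotoneOn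
      ⟨he, hle.trans (min_le_left _ _)⟩ hmin hle
  · rcases min_choice x₀ c with h | h <;> rw [h] at hlt ⊢
    · exact hmax he
    · exact absurd hec hlt.not_ge

end Concave

section Threshold

variable {ebar estar : ℝ}

theorem BCset_thresholdPolicy (hestar : estar ∈ Icc 0 ebar) :
    BCset ebar (thresholdPolicy ebar estar) = Icc 0 estar ∪ {ebar} := by
  have hebar : ebar ∈ Icc 0 ebar := ⟨hestar.1.trans hestar.2, le_rfl⟩
  ext e
  constructor
  · rintro ⟨he, hfiber⟩
    by_cases hes : e ≤ estar
    · exact Or.inl ⟨he.1, hes⟩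
    · exact Or.inr (he.2.antisymm (hfiber ebar hebar (by simp [thresholdPolicy, hes])))
  · rintro (⟨he0, hes⟩ | rfl)
    · refine ⟨⟨he0, hes.trans hestar.2⟩, fun e' he' hd => ?_⟩
      simp only [thresholdPolicy, if_pos hes] at hd
      split_ifs at hd
      · exact hd.le
      · exact hd ▸ he'.2
    · exact ⟨hebar, fun e' he' _ => he'.2⟩

theorem isLeast_maximizersOn_Icc_union_singleton_min {f : ℝ → ℝ} {x₀ e₁ : ℝ}
    (hf : StrictConcaveOn ℝ (Icc 0 ebar) f) (hx₀ : x₀ ∈ Icc 0 ebar)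
    (hmax : IsMaxOn f (Icc 0 ebar) x₀) (hestar : estar ∈ Icc 0 ebar)
    (he₁ : e₁ ∈ Icc 0 estar) (hbar : f ebar ≤ f e₁) :
    IsLeast (maximizersOn f (Icc 0 estar ∪ {ebar})) (min x₀ estar) := by
  have hsub : Icc 0 estar ⊆ Icc 0 ebar ∩ Iic estar := fun e he =>
    ⟨⟨he.1, he.2.trans hestar.2⟩, he.2⟩
  have hpeak : IsMaxOn f (Icc 0 estar) (min x₀ estar) :=
    (hf.isMaxOn_min_of_isMaxOn hx₀ hmax hestar).on_subset hsub
  have hm : min x₀ estar ∈ Icc 0 estar :=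
    ⟨le_min hx₀.1 hestar.1, min_le_right _ _⟩
  refine isLeast_maximizersOn (Or.inl hm) ?_ ?_
  · rintro e (he | rfl)
    exacts [hpeak he, hbar.trans (hpeak he₁)]
  · rintro e (he | rfl) hem
    · exact hf.strictMonoOn_of_isMaxOn hx₀ hmax ⟨(hsub he).1, hem.le.trans (min_le_left _ _)⟩
        ⟨(hsub hm).1, min_le_left x₀ estar⟩ hem
    · exact absurd (hm.2.trans hestar.2) hem.not_ge

theorem isLeast_maximizersOn_Icc_union_singleton_self {f : ℝ → ℝ} {el : ℝ}
    (hestar : estar ∈ Icc 0 ebar)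
    (hel : el ∈ lowerBounds {e ∈ Icc 0 ebar | f ebar ≤ f e}) (hlt : estar < el) :
    IsLeast (maximizersOn f (Icc 0 estar ∪ {ebar})) ebar := by
  have hbelow : ∀ e ∈ Icc 0 estar, f e < f ebar := fun e he =>
    not_le.1 fun hle => (hel ⟨⟨he.1, he.2.trans hestar.2⟩, hle⟩).not_gt (he.2.trans_lt hlt)
  refine isLeast_maximizersOn (Or.inr rfl) ?_ ?_
  · rintro e (he | rfl)
    exacts [(hbelow e he).le, le_refl (f _)]
  · rintro e (he | rfl) hlt_bar
    exacts [hbelow e he, absurd hlt_bar (lt_irrefl _)]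

end Threshold

theorem threshold_policy_properties_general (ebar θl θh : ℝ)
    (π : ℝ → ℝ → ℝ)
    (hconc : ∀ θ ∈ Icc θl θh, StrictConcaveOn ℝ (Icc 0 ebar) (π θ))
    (elow ehat : ℝ → ℝ)
    (helow : ∀ θ ∈ Icc θl θh,
        IsLeast {e ∈ Icc (0:ℝ) ebar | π θ ebar ≤ π θ e} (elow θ))
    (hehat : ∀ θ ∈ Icc θl θh, ehat θ ∈ Icc 0 ebar ∧
        (∀ e ∈ Icc 0 ebar, π θ e ≤ π θ (ehat θ)) ∧
        (∀ e ∈ Icc 0 ebar, (∀ e' ∈ Icc 0 ebar, π θ e' ≤ π θ e) → e = ehat θ))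
    (estar : ℝ) (hestar : estar ∈ Icc 0 ebar) :
    BCset ebar (fun e => if e ≤ estar then e else ebar) = Icc 0 estar ∪ {ebar} ∧
      Admissible ebar θl θh π (fun e => if e ≤ estar then e else ebar) ∧
      ∀ θ ∈ Icc θl θh,
        (elow θ ≤ estar →
          emissionFn ebar π (fun e => if e ≤ estar then e else ebar) θ
            = min (ehat θ) estar) ∧
        (estar < elow θ →
          emissionFn ebar π (fun e => if e ≤ estar then e else ebar) θ = ebar) := by
  rw [show (fun e => if e ≤ estar then e else ebar) = thresholdPolicy ebar estar from rfl]
  have hBC := BCset_thresholdPolicy hestar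
  have hleast : ∀ θ ∈ Icc θl θh,
      (elow θ ≤ estar → IsLeast (maximizersOn (π θ) (BCset ebar (thresholdPolicy ebar estar)))
        (min (ehat θ) estar)) ∧
      (estar < elow θ →
        IsLeast (maximizersOn (π θ) (BCset ebar (thresholdPolicy ebar estar))) ebar) := by
    intro θ hθ
    obtain ⟨⟨hel, hel_bar⟩, hel_low⟩ := helow θ hθ
    obtain ⟨hx₀, hmax, -⟩ := hehat θ hθ
    rw [hBC]
    exact ⟨fun hle => isLeast_maximizersOn_Icc_union_singleton_min (hconc θ hθ) hx₀ hmax hestar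
      ⟨hel.1, hle⟩ hel_bar,
      isLeast_maximizersOn_Icc_union_singleton_self hestar hel_low⟩
  refine ⟨hBC, fun θ hθ => ?_,
    fun θ hθ => ⟨fun h => ((hleast θ hθ).1 h).csInf_eq, fun h => ((hleast θ hθ).2 h).csInf_eq⟩⟩
  rcases le_or_gt (elow θ) estar with h | h
  exacts [⟨_, ((hleast θ hθ).1 h).1⟩, ⟨_, ((hleast θ hθ).2 h).1⟩]

/-- the threshold policy with threshold `e*` has belief-compatible set
`[0, e*] ∪ {ē}`, is admissible, and implements `min(ê(θ), e*)` for types with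
`e̲(θ) ≤ e*` and `ē` for types with `e̲(θ) > e*`. -/
theorem threshold_policy_properties (ebar θl θh : ℝ) (hebar : 0 < ebar) (hθ : θl ≤ θh)
    (π : ℝ → ℝ → ℝ)
    (hcont : ContinuousOn (fun p : ℝ × ℝ => π p.1 p.2) (Icc θl θh ×ˢ Icc 0 ebar))
    (hconc : ∀ θ ∈ Icc θl θh, StrictConcaveOn ℝ (Icc 0 ebar) (π θ))
    (hIR : ∀ θ ∈ Icc θl θh, π θ 0 < π θ ebar)
    (elow ehat : ℝ → ℝ)
    (helow : ∀ θ ∈ Icc θl θh,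
        IsLeast {e ∈ Icc (0:ℝ) ebar | π θ ebar ≤ π θ e} (elow θ))
    (hehat : ∀ θ ∈ Icc θl θh, ehat θ ∈ Icc 0 ebar ∧
        (∀ e ∈ Icc 0 ebar, π θ e ≤ π θ (ehat θ)) ∧
        (∀ e ∈ Icc 0 ebar, (∀ e' ∈ Icc 0 ebar, π θ e' ≤ π θ e) → e = ehat θ))
    (estar : ℝ) (hestar : estar ∈ Icc 0 ebar) :
    BCset ebar (fun e => if e ≤ estar then e else ebar) = Icc 0 estar ∪ {ebar} ∧
      Admissible ebar θl θh π (fun e => if e ≤ estar then e else ebar) ∧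
      ∀ θ ∈ Icc θl θh,
        (elow θ ≤ estar →
          emissionFn ebar π (fun e => if e ≤ estar then e else ebar) θ
            = min (ehat θ) estar) ∧
        (estar < elow θ →
          emissionFn ebar π (fun e => if e ≤ estar then e else ebar) θ = ebar) :=
  threshold_policy_properties_general ebar θl θh π hconc elow ehat helow hehat estar hestar
end
end

section
/- Suppose π(θ, e) = π₀(e) + θ·e for a continuous, strictly concave π₀ : E → ℝ, with π(θ,0) < π(θ,ē) for all θ ∈ Θ. Then the map θ ↦ ê(θ) is nondecreasing on Θ: θ ≤ θ' implies ê(θ) ≤ ê(θ'). -/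
open Set MeasureTheory

noncomputable section

open Set

/-- Adding the two optimality inequalities gives `(θ' - θ) (b - a) ≥ 0`. -/
theorem le_of_isMaxOn_add_mul {𝕜 : Type*} [Field 𝕜] [LinearOrder 𝕜] [IsStrictOrderedRing 𝕜]
    {g : 𝕜 → 𝕜} {s : Set 𝕜} {θ θ' a b : 𝕜} (hθ : θ < θ') (ha : a ∈ s) (hb : b ∈ s)
    (hmax : IsMaxOn (fun e => g e + θ * e) s a) (hmax' : IsMaxOn (fun e => g e + θ' * e) s b) :
    a ≤ b := by
  by_contra! hba
  have h := isMaxOn_iff.1 hmax b hb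
  have h' := isMaxOn_iff.1 hmax' a ha
  nlinarith

theorem ehat_monotone_general (ebar θl θh : ℝ)
    (π0 : ℝ → ℝ) (π : ℝ → ℝ → ℝ)
    (hπ : ∀ θ e, π θ e = π0 e + θ * e)
    (ehat : ℝ → ℝ)
    (hehat : ∀ θ ∈ Icc θl θh, ehat θ ∈ Icc 0 ebar ∧
        (∀ e ∈ Icc 0 ebar, π θ e ≤ π θ (ehat θ)) ∧
        (∀ e ∈ Icc 0 ebar, (∀ e' ∈ Icc 0 ebar, π θ e' ≤ π θ e) → e = ehat θ)) :
    ∀ θ ∈ Icc θl θh, ∀ θ' ∈ Icc θl θh, θ ≤ θ' → ehat θ ≤ ehat θ' := by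
  intro θ hθ θ' hθ' hle
  rcases hle.eq_or_lt with rfl | hlt
  · exact le_rfl
  obtain ⟨hmem, hmax, -⟩ := hehat θ hθ
  obtain ⟨hmem', hmax', -⟩ := hehat θ' hθ'
  refine le_of_isMaxOn_add_mul (g := π0) hlt hmem hmem' (isMaxOn_iff.2 ?_) (isMaxOn_iff.2 ?_)
  · simpa only [hπ] using hmax
  · simpa only [hπ] using hmax'

/-- with `π(θ,e) = π₀(e) + θ·e`, the unconstrained optimum `ê` is
nondecreasing in `θ`. -/
theorem ehat_monotone (ebar θl θh : ℝ) (hebar : 0 < ebar) (hθ : θl ≤ θh)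
    (π0 : ℝ → ℝ) (π : ℝ → ℝ → ℝ)
    (hπ : ∀ θ e, π θ e = π0 e + θ * e)
    (hπ0cont : ContinuousOn π0 (Icc 0 ebar))
    (hπ0conc : StrictConcaveOn ℝ (Icc 0 ebar) π0)
    (hIR : ∀ θ ∈ Icc θl θh, π θ 0 < π θ ebar)
    (ehat : ℝ → ℝ)
    (hehat : ∀ θ ∈ Icc θl θh, ehat θ ∈ Icc 0 ebar ∧
        (∀ e ∈ Icc 0 ebar, π θ e ≤ π θ (ehat θ)) ∧
        (∀ e ∈ Icc 0 ebar, (∀ e' ∈ Icc 0 ebar, π θ e' ≤ π θ e) → e = ehat θ)) :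
    ∀ θ ∈ Icc θl θh, ∀ θ' ∈ Icc θl θh, θ ≤ θ' → ehat θ ≤ ehat θ' :=
  ehat_monotone_general ebar θl θh π0 π hπ ehat hehat
end
end

section
/- Suppose π(θ, e) = π₀(e) + θ·e for a continuous, strictly concave π₀ : E → ℝ, with π(θ,0) < π(θ,ē) for all θ ∈ Θ. Then the map θ ↦ e̲(θ) is nondecreasing on Θ: θ ≤ θ' implies e̲(θ) ≤ e̲(θ'). -/
open Set MeasureTheory

noncomputable section

/-- with `π(θ,e) = π₀(e) + θ·e`, the IR lower bound `e̲` is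
nondecreasing in `θ`. -/
theorem elow_monotone (ebar θl θh : ℝ) (hebar : 0 < ebar) (hθ : θl ≤ θh)
    (π0 : ℝ → ℝ) (π : ℝ → ℝ → ℝ)
    (hπ : ∀ θ e, π θ e = π0 e + θ * e)
    (hπ0cont : ContinuousOn π0 (Icc 0 ebar))
    (hπ0conc : StrictConcaveOn ℝ (Icc 0 ebar) π0)
    (hIR : ∀ θ ∈ Icc θl θh, π θ 0 < π θ ebar)
    (elow : ℝ → ℝ)
    (helow : ∀ θ ∈ Icc θl θh,
        IsLeast {e ∈ Icc (0:ℝ) ebar | π θ ebar ≤ π θ e} (elow θ)) :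
    ∀ θ ∈ Icc θl θh, ∀ θ' ∈ Icc θl θh, θ ≤ θ' → elow θ ≤ elow θ' := by
  intro θ hθm θ' hθ'm hle
  obtain ⟨⟨he'mem, he'π⟩, -⟩ := helow θ' hθ'm
  exact (helow θ hθm).2 ⟨he'mem, by
    simp only [hπ] at he'π ⊢
    nlinarith [he'mem.2]⟩
end
end
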